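/- arXiv:1612.04302 — 8 statements merged into one kernel-verified Lean document; each statement's English description precedes it below -/
import Mathlib

section
/- Two order-preserving maps f, g : X → Y between finite posets are homotopic (as continuous maps between the associated finite topological spaces) if and only if there exists a finite sequence f = f₀, f₁, …, fₙ = g of order-preserving maps such that fᵢ and fᵢ₊₁ are comparable (pointwise fᵢ ≤ fᵢ₊₁ or fᵢ₊₁ ≤ fᵢ) for each i. -/
/-- The Alexandrov (down-set) topology on a poset: open sets are the down-sets. -/
def alexandrov (X : Type*) [PartialOrder X] : TopologicalSpace X where
  IsOpen U := IsLowerSet U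
  isOpen_univ := isLowerSet_univ
  isOpen_inter := fun _ _ hU hV => hU.inter hV
  isOpen_sUnion := fun _ h => isLowerSet_sUnion h

theorem monotone_continuous_alexandrov {X Y : Type*} [PartialOrder X] [PartialOrder Y]
    {f : X → Y} (hf : Monotone f) :
    @Continuous X Y (alexandrov X) (alexandrov Y) f := by
  letI := alexandrov X
  letI := alexandrov Y
  rw [continuous_def]
  intro U hU
  exact IsLowerSet.preimage hU hf

theorem monotone_of_continuous_alexandrov {X Y : Type*} [PartialOrder X] [PartialOrder Y]
    {f : X → Y} (hf : @Continuous X Y (alexandrov X) (alexandrov Y) f) : Monotone f := by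
  letI := alexandrov X
  letI := alexandrov Y
  intro a b hab
  have hU : IsLowerSet (f ⁻¹' {z | z ≤ f b}) :=
    hf.isOpen_preimage _ (fun u v huv hu => le_trans huv hu)
  exact hU hab (le_refl (f b))

theorem homotopic_of_le {X Y : Type*} [PartialOrder X] [PartialOrder Y]
    {f g : X → Y} (hf : Monotone f) (hg : Monotone g) (hfg : f ≤ g) :
    letI := alexandrov X
    letI := alexandrov Y
    ContinuousMap.Homotopic ⟨f, monotone_continuous_alexandrov hf⟩
      ⟨g, monotone_continuous_alexandrov hg⟩ := by
  letI := alexandrov X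
  letI := alexandrov Y
  have h01 : (0 : unitInterval) ≠ 1 := fun h => by
    simpa using congrArg Subtype.val h
  refine ⟨⟨⟨fun p => if p.1 = 1 then g p.2 else f p.2, ?_⟩, ?_, ?_⟩⟩
  · rw [continuous_def]
    intro U hU
    have hU' : IsLowerSet U := hU
    have heq : (fun p : unitInterval × X => if p.1 = 1 then g p.2 else f p.2) ⁻¹' U
        = ({t : unitInterval | t ≠ 1} ×ˢ (f ⁻¹' U)) ∪ (Set.univ ×ˢ (g ⁻¹' U)) := by
      ext ⟨t, x⟩
      by_cases ht : t = 1 <;> simp [ht, Set.mem_prod]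
      exact fun h => hU' (hfg x) h
    rw [heq]
    have h1 : IsOpen ({t : unitInterval | t ≠ 1}) := isOpen_compl_singleton
    have h2 : IsOpen (f ⁻¹' U) := (monotone_continuous_alexandrov hf).isOpen_preimage U hU
    have h3 : IsOpen (g ⁻¹' U) := (monotone_continuous_alexandrov hg).isOpen_preimage U hU
    exact (h1.prod h2).union (isOpen_univ.prod h3)
  · intro x; simp [h01]
  · intro x; simp

theorem homotopic_of_comparable {X Y : Type*} [PartialOrder X] [PartialOrder Y]
    {f g : X → Y} (hf : Monotone f) (hg : Monotone g) (hfg : f ≤ g ∨ g ≤ f) :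
    letI := alexandrov X
    letI := alexandrov Y
    ContinuousMap.Homotopic ⟨f, monotone_continuous_alexandrov hf⟩
      ⟨g, monotone_continuous_alexandrov hg⟩ := by
  letI := alexandrov X
  letI := alexandrov Y
  show ContinuousMap.Homotopic _ _
  rcases hfg with h | h
  · exact homotopic_of_le hf hg h
  · exact (homotopic_of_le hg hf h).symm

/-- Convert a refl-trans chain of comparabilities to a `Fin`-indexed fence. -/
theorem chain_to_fence {X Y : Type*} [PartialOrder X] [PartialOrder Y]
    {f g : X → Y} (hf : Monotone f)
    (h : Relation.ReflTransGen (fun a b => Monotone b ∧ (a ≤ b ∨ b ≤ a)) f g) :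
    ∃ (n : ℕ) (F : Fin (n + 1) → X → Y),
      (∀ i, Monotone (F i)) ∧ F 0 = f ∧ F (Fin.last n) = g ∧
      ∀ i : Fin n, F i.castSucc ≤ F i.succ ∨ F i.succ ≤ F i.castSucc := by
  induction h with
  | refl => exact ⟨0, fun _ => f, fun _ => hf, rfl, rfl, fun i => i.elim0⟩
  | @tail b c _ hbc ih =>
    obtain ⟨n, F, hmono, h0, hlast, hcomp⟩ := ih
    refine ⟨n + 1, Fin.snoc F c, ?_, ?_, ?_, ?_⟩
    · intro i
      induction i using Fin.lastCases with
      | last => simpa [Fin.snoc_last] using hbc.1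
      | cast j => simpa [Fin.snoc_castSucc] using hmono j
    · have : (0 : Fin (n + 2)) = Fin.castSucc 0 := rfl
      rw [this, Fin.snoc_castSucc, h0]
    · rw [Fin.snoc_last]
    · intro i
      induction i using Fin.lastCases with
      | last =>
        rw [Fin.succ_last, Fin.snoc_last, Fin.snoc_castSucc, hlast]
        exact hbc.2
      | cast j =>
        rw [Fin.succ_castSucc, Fin.snoc_castSucc, Fin.snoc_castSucc]
        exact hcomp j

/-- Two order-preserving maps between finite posets are homotopic (as continuous maps
between the associated finite topological spaces) iff they are connected by a fence of
order-preserving maps in which consecutive maps are pointwise comparable. -/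
theorem homotopic_iff_fence {X Y : Type*} [Fintype X] [Fintype Y]
    [PartialOrder X] [PartialOrder Y] (f g : X → Y) (hf : Monotone f) (hg : Monotone g) :
    (letI := alexandrov X
     letI := alexandrov Y
     ContinuousMap.Homotopic ⟨f, monotone_continuous_alexandrov hf⟩
       ⟨g, monotone_continuous_alexandrov hg⟩) ↔
    ∃ (n : ℕ) (F : Fin (n + 1) → X → Y),
      (∀ i, Monotone (F i)) ∧ F 0 = f ∧ F (Fin.last n) = g ∧
      ∀ i : Fin n, F i.castSucc ≤ F i.succ ∨ F i.succ ≤ F i.castSucc := by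
  letI := alexandrov X
  letI := alexandrov Y
  constructor
  · intro h
    obtain ⟨H⟩ := h
    set Ht : unitInterval → X → Y := fun t x => H (t, x) with hHt
    have hcont : ∀ t, Continuous (Ht t) := fun t =>
      H.continuous.comp (continuous_const.prodMk continuous_id)
    have hmonot : ∀ t, Monotone (Ht t) := fun t =>
      monotone_of_continuous_alexandrov (hcont t)
    have key : ∀ t : unitInterval, ∃ V : Set unitInterval,
        IsOpen V ∧ t ∈ V ∧ ∀ s ∈ V, Ht s ≤ Ht t := by
      intro t
      refine ⟨⋂ x : X, {s | Ht s x ≤ Ht t x}, ?_, ?_, ?_⟩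
      · apply isOpen_iInter_of_finite
        intro x
        have hc : Continuous fun s => Ht s x :=
          H.continuous.comp (continuous_id.prodMk continuous_const)
        have : {s | Ht s x ≤ Ht t x} = (fun s => Ht s x) ⁻¹' {y | y ≤ Ht t x} := rfl
        rw [this]
        exact hc.isOpen_preimage _ (fun u v huv hu => le_trans huv hu)
      · exact Set.mem_iInter.mpr fun x => le_refl _
      · intro s hs x
        exact Set.mem_iInter.mp hs x
    set r : (X → Y) → (X → Y) → Prop := fun a b => Monotone b ∧ (a ≤ b ∨ b ≤ a) with hr
    set S : Set unitInterval := {t | Relation.ReflTransGen r f (Ht t)} with hS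
    have hSopen : IsOpen S := by
      rw [isOpen_iff_mem_nhds]
      intro t ht
      obtain ⟨V, hV, htV, hVle⟩ := key t
      refine Filter.mem_of_superset (hV.mem_nhds htV) ?_
      intro s hs
      exact Relation.ReflTransGen.tail ht ⟨hmonot s, Or.inr (hVle s hs)⟩
    have hScl : IsClosed S := by
      rw [← isOpen_compl_iff, isOpen_iff_mem_nhds]
      intro t ht
      obtain ⟨V, hV, htV, hVle⟩ := key t
      refine Filter.mem_of_superset (hV.mem_nhds htV) ?_
      intro s hs hsS
      exact ht (Relation.ReflTransGen.tail hsS ⟨hmonot t, Or.inl (hVle s hs)⟩)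
    have h0S : (0 : unitInterval) ∈ S := by
      have : Ht 0 = f := funext fun x => H.apply_zero x
      simp only [hS, Set.mem_setOf_eq, this]
      exact Relation.ReflTransGen.refl
    have hSuniv : S = Set.univ := IsClopen.eq_univ ⟨hScl, hSopen⟩ ⟨0, h0S⟩
    have h1S : (1 : unitInterval) ∈ S := hSuniv ▸ Set.mem_univ _
    have hg' : Ht 1 = g := funext fun x => H.apply_one x
    rw [hS] at h1S
    exact chain_to_fence hf (hg' ▸ h1S)
  · rintro ⟨n, F, hmono, h0, hlast, hcomp⟩
    have key : ∀ i : Fin (n + 1),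
        ContinuousMap.Homotopic
          ⟨F 0, monotone_continuous_alexandrov (hmono 0)⟩
          ⟨F i, monotone_continuous_alexandrov (hmono i)⟩ := by
      intro i
      induction i using Fin.induction with
      | zero => exact ContinuousMap.Homotopic.refl _
      | succ j ih =>
        exact ih.trans (homotopic_of_comparable (hmono j.castSucc) (hmono j.succ) (hcomp j))
    have hkey := key (Fin.last n)
    have e0 : (⟨F 0, monotone_continuous_alexandrov (hmono 0)⟩ : C(X, Y))
        = ⟨f, monotone_continuous_alexandrov hf⟩ := by
      apply ContinuousMap.ext; intro x; exact congrFun h0 x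
    have e1 : (⟨F (Fin.last n), monotone_continuous_alexandrov (hmono (Fin.last n))⟩ : C(X, Y))
        = ⟨g, monotone_continuous_alexandrov hg⟩ := by
      apply ContinuousMap.ext; intro x; exact congrFun hlast x
    rw [e0, e1] at hkey
    exact hkey
end

section
/- Let G be a finite group and p a prime. If for every Sylow p-subgroup P of G the subgroup Ω₁(P) generated by elements of order p is abelian, then the map r sending a nontrivial p-subgroup Q to Ω₁(Q) is a well-defined order-preserving retraction from S_p(G) onto A_p(G), satisfying i∘r ≤ id on S_p(G) and r∘i = id on A_p(G), where i is the inclusion. -/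
/-- `Omega1 p Q` is the subgroup generated by the elements of order `p` of `Q`. -/
def Omega1 {G : Type*} [Group G] (p : ℕ) (Q : Subgroup G) : Subgroup G :=
  Subgroup.closure {x : G | x ∈ Q ∧ orderOf x = p}

lemma Omega1_mono {G : Type*} [Group G] (p : ℕ) {Q R : Subgroup G} (hQR : Q ≤ R) :
    Omega1 p Q ≤ Omega1 p R :=
  Subgroup.closure_mono (fun x hx => ⟨hQR hx.1, hx.2⟩)

lemma Omega1_le {G : Type*} [Group G] (p : ℕ) (Q : Subgroup G) : Omega1 p Q ≤ Q :=
  (Subgroup.closure_le _).2 (fun _ hx => hx.1)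

lemma isCommutative_of_le {G : Type*} [Group G] {K H : Subgroup G} (hKH : K ≤ H)
    (hH : IsMulCommutative H) : IsMulCommutative K := by
  constructor
  constructor
  intro a b
  have := hH
  exact Subtype.ext (Subgroup.mul_comm_of_mem_isMulCommutative (H := H) (hKH a.2) (hKH b.2))

/-- If `Ω₁(P)` is abelian for every Sylow `p`-subgroup `P` of `G`, then `Q ↦ Ω₁(Q)` is a
well-defined order-preserving retraction from the poset of nontrivial `p`-subgroups onto the
poset of nontrivial elementary abelian `p`-subgroups, satisfying `i ∘ r ≤ id` and `r ∘ i = id`. -/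
theorem omega1_retraction {G : Type*} [Group G] [Fintype G] {p : ℕ} [Fact p.Prime]
    (h : ∀ P : Sylow p G, IsMulCommutative (Omega1 p (P : Subgroup G))) :
    (∀ Q : Subgroup G, IsPGroup p Q → Q ≠ ⊥ →
      Omega1 p Q ≠ ⊥ ∧ IsMulCommutative (Omega1 p Q) ∧ (∀ x ∈ Omega1 p Q, x ^ p = 1) ∧
        Omega1 p Q ≤ Q) ∧
    (∀ Q R : Subgroup G, Q ≤ R → Omega1 p Q ≤ Omega1 p R) ∧
    (∀ Q : Subgroup G, Q ≠ ⊥ → IsMulCommutative Q → (∀ x ∈ Q, x ^ p = 1) →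
      Omega1 p Q = Q) := by
  have hp : p.Prime := Fact.out
  refine ⟨?_, fun Q R hQR => Omega1_mono p hQR, ?_⟩
  · intro Q hQ hQbot
    obtain ⟨P, hQP⟩ := hQ.exists_le_sylow
    have hcomm : IsMulCommutative (Omega1 p Q) :=
      isCommutative_of_le (Omega1_mono p hQP) (h P)
    refine ⟨?_, hcomm, ?_, Omega1_le p Q⟩
    · -- nontrivial: there is an element of order p in Q
      have hnt : Nontrivial Q := (Subgroup.nontrivial_iff_ne_bot Q).mpr hQbot
      obtain ⟨n, hn, hcard⟩ := (hQ.nontrivial_iff_card).mp hnt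
      have hdvd : p ∣ Nat.card Q := hcard ▸ dvd_pow_self p hn.ne'
      have : Fintype Q := Fintype.ofFinite Q
      obtain ⟨g, hg⟩ := exists_prime_orderOf_dvd_card' (G := Q) p
        (by simpa [Nat.card_eq_fintype_card] using hdvd)
      have hgmem : (g : G) ∈ Omega1 p Q :=
        Subgroup.subset_closure ⟨g.2, by rw [Subgroup.orderOf_coe, hg]⟩
      intro hbot
      have hg1 : (g : G) = 1 := by simpa [hbot] using hgmem
      have : orderOf (g : G) = 1 := by rw [hg1, orderOf_one]
      rw [Subgroup.orderOf_coe, hg] at this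
      exact hp.one_lt.ne' this
    · -- exponent p
      intro x hx
      induction hx using Subgroup.closure_induction with
      | mem g hg => exact hg.2 ▸ pow_orderOf_eq_one g
      | one => exact one_pow p
      | mul a b ha hb iha ihb =>
        have hc : Commute a b := Subgroup.mul_comm_of_mem_isMulCommutative (H := Omega1 p Q) ha hb
        rw [hc.mul_pow, iha, ihb, one_mul]
      | inv a ha iha => rw [inv_pow, iha, inv_one]
  · intro Q _ hQc hQp
    refine le_antisymm (Omega1_le p Q) (fun x hx => ?_)
    by_cases hx1 : x = 1
    · exact hx1 ▸ (Omega1 p Q).one_mem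
    · apply Subgroup.subset_closure
      refine ⟨hx, ?_⟩
      have := orderOf_eq_prime (hQp x hx) hx1
      exact this
end

section
/- Let G be a finite group and p a prime. If there exists an order-preserving retraction r : S_p(G) → A_p(G) (i.e. r restricted to A_p(G) is the identity) with i∘r comparable to the identity of S_p(G), then r(Q) ≥ Ω₁(Q) for every nontrivial p-subgroup Q, and consequently Ω₁(P) is abelian for every Sylow p-subgroup P of G. -/
/-- If there is an order-preserving retraction `r` of the poset of nontrivial `p`-subgroups
onto the poset of nontrivial elementary abelian `p`-subgroups with `i ∘ r` comparable to the
identity, then `Ω₁(Q) ≤ r Q` for every nontrivial `p`-subgroup `Q`, and consequently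
`Ω₁(P)` is abelian for every Sylow `p`-subgroup `P`. -/
theorem retraction_implies_omega1_abelian {G : Type*} [Group G] [Fintype G] {p : ℕ}
    [Fact p.Prime] (r : Subgroup G → Subgroup G)
    (hwd : ∀ Q : Subgroup G, IsPGroup p Q → Q ≠ ⊥ →
      r Q ≠ ⊥ ∧ IsMulCommutative (r Q) ∧ ∀ x ∈ r Q, x ^ p = 1)
    (hmono : ∀ Q R : Subgroup G, IsPGroup p Q → Q ≠ ⊥ → IsPGroup p R → R ≠ ⊥ →
      Q ≤ R → r Q ≤ r R)
    (hretr : ∀ Q : Subgroup G, Q ≠ ⊥ → IsMulCommutative Q → (∀ x ∈ Q, x ^ p = 1) → r Q = Q)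
    (hcomp : (∀ Q : Subgroup G, IsPGroup p Q → Q ≠ ⊥ → r Q ≤ Q) ∨
             (∀ Q : Subgroup G, IsPGroup p Q → Q ≠ ⊥ → Q ≤ r Q)) :
    (∀ Q : Subgroup G, IsPGroup p Q → Q ≠ ⊥ → Omega1 p Q ≤ r Q) ∧
    ∀ P : Sylow p G, IsMulCommutative (Omega1 p (P : Subgroup G)) := by
  have hp : p.Prime := Fact.out
  have key : ∀ Q : Subgroup G, IsPGroup p Q → Q ≠ ⊥ → Omega1 p Q ≤ r Q := by
    intro Q hQ hQb
    refine (Subgroup.closure_le (r Q)).2 ?_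
    rintro x ⟨hxQ, hxo⟩
    have hxp : x ^ p = 1 := hxo ▸ pow_orderOf_eq_one x
    have hx1 : x ≠ 1 := by
      rintro rfl; simp [orderOf_one] at hxo; exact hp.one_lt.ne hxo
    have hzb : Subgroup.zpowers x ≠ ⊥ := by simpa [Subgroup.zpowers_eq_bot] using hx1
    have hpow : ∀ y ∈ Subgroup.zpowers x, y ^ p = 1 := by
      rintro y ⟨k, rfl⟩
      calc (x ^ k) ^ p = (x ^ p) ^ k := by
            rw [← zpow_natCast, ← zpow_mul, mul_comm, zpow_mul, zpow_natCast]
        _ = 1 := by rw [hxp, one_zpow]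
    have hPg : IsPGroup p (Subgroup.zpowers x) := by
      intro g
      exact ⟨1, Subtype.ext (by rw [pow_one]; push_cast; exact hpow g g.2)⟩
    have hr : r (Subgroup.zpowers x) = Subgroup.zpowers x :=
      hretr _ hzb inferInstance hpow
    have hle : Subgroup.zpowers x ≤ Q := Subgroup.zpowers_le.2 hxQ
    have := hmono _ _ hPg hzb hQ hQb hle
    rw [hr] at this
    exact this (Subgroup.mem_zpowers x)
  refine ⟨key, ?_⟩
  intro P
  by_cases hP : (P : Subgroup G) = ⊥
  · have hset : {x : G | x ∈ (P : Subgroup G) ∧ orderOf x = p} = ∅ := by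
      ext x
      simp only [Set.mem_setOf_eq, hP, Subgroup.mem_bot, Set.mem_empty_iff_false, iff_false]
      rintro ⟨rfl, h⟩
      simp [orderOf_one] at h
      exact hp.one_lt.ne h
    have : Omega1 p (P : Subgroup G) = ⊥ := by
      rw [Omega1, hset, Subgroup.closure_empty]
    rw [this]
    exact ⟨⟨fun a b => Subtype.ext (by
      have ha := a.2; have hb := b.2
      simp only [Subgroup.mem_bot] at ha hb
      simp [ha, hb])⟩⟩
  · have hPg := P.isPGroup'
    have hle := key P hPg hP
    obtain ⟨-, hc, -⟩ := hwd P hPg hP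
    exact ⟨⟨fun a b => Subtype.ext
      (Subgroup.mul_comm_of_mem_isMulCommutative (H := r P) (hle a.2) (hle b.2))⟩⟩
end

section
/- Let G be a finite group and p a prime. If all maximal elementary abelian p-subgroups of G are conjugate and O_p(G) ≠ 1, then the subgroup Ω₁(Z(O_p(G))) is a nontrivial elementary abelian p-subgroup contained in every maximal elementary abelian p-subgroup of G. -/
/-- `pcore p G = O_p(G)`, the intersection of all Sylow `p`-subgroups of `G`. -/
def pcore (p : ℕ) (G : Type*) [Group G] : Subgroup G :=
  ⨅ P : Sylow p G, (P : Subgroup G)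

/-- `A` is a maximal `p`-torus: a nontrivial elementary abelian `p`-subgroup which is not
properly contained in any other nontrivial elementary abelian `p`-subgroup. -/
def IsMaxTorus {G : Type*} [Group G] (p : ℕ) (A : Subgroup G) : Prop :=
  A ≠ ⊥ ∧ IsMulCommutative A ∧ (∀ x ∈ A, x ^ p = 1) ∧
    ∀ B : Subgroup G, B ≠ ⊥ → IsMulCommutative B → (∀ x ∈ B, x ^ p = 1) → A ≤ B → A = B

section Aux

variable {G : Type*} [Group G]

lemma conj_mem_centralizer_iff (g x : G) (S : Set G) :
    (MulAut.conj g) x ∈ Subgroup.centralizer ((MulAut.conj g) '' S) ↔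
      x ∈ Subgroup.centralizer S := by
  simp only [Subgroup.mem_centralizer_iff, Set.forall_mem_image, ← map_mul,
    (MulAut.conj g).injective.eq_iff]

lemma map_conj_centralizer (g : G) (S : Set G) :
    Subgroup.map (MulAut.conj g).toMonoidHom (Subgroup.centralizer S) =
      Subgroup.centralizer ((MulAut.conj g) '' S) := by
  ext x
  constructor
  · rintro ⟨y, hy, rfl⟩
    exact (conj_mem_centralizer_iff g y S).2 hy
  · intro hx
    refine ⟨(MulAut.conj g).symm x, (conj_mem_centralizer_iff g _ S).1 ?_,
      (MulAut.conj g).apply_symm_apply x⟩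
    rw [(MulAut.conj g).apply_symm_apply]
    exact hx

lemma map_conj_pcore (p : ℕ) (g : G) [Fintype G] [Fact p.Prime] :
    Subgroup.map (MulAut.conj g).toMonoidHom (pcore p G) = pcore p G := by
  have hmap : ∀ (h : G) (P : Sylow p G),
      Subgroup.map (MulAut.conj h).toMonoidHom (P : Subgroup G) = ↑(h • P) := fun _ _ => rfl
  rw [pcore, Subgroup.map_iInf _ (MulAut.conj g).injective]
  apply le_antisymm
  · refine le_iInf fun P => ?_
    have h1 := iInf_le (fun Q : Sylow p G =>
      Subgroup.map (MulAut.conj g).toMonoidHom (Q : Subgroup G)) (g⁻¹ • P)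
    rwa [hmap, smul_smul, mul_inv_cancel, one_smul] at h1
  · refine le_iInf fun P => ?_
    have h1 := iInf_le (fun Q : Sylow p G => (Q : Subgroup G)) (g • P)
    rwa [← hmap] at h1

lemma map_conj_Omega1 (p : ℕ) (g : G) (Q : Subgroup G) :
    Subgroup.map (MulAut.conj g).toMonoidHom (Omega1 p Q) =
      Omega1 p (Subgroup.map (MulAut.conj g).toMonoidHom Q) := by
  rw [Omega1, Omega1, MonoidHom.map_closure]
  congr 1
  ext x
  simp only [Set.mem_image, Set.mem_setOf_eq]
  constructor
  · rintro ⟨y, ⟨hy, hyo⟩, rfl⟩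
    exact ⟨⟨y, hy, rfl⟩,
      by rw [orderOf_injective _ (MulAut.conj g).injective, hyo]⟩
  · rintro ⟨⟨y, hy, rfl⟩, hxo⟩
    refine ⟨y, ⟨hy, ?_⟩, rfl⟩
    rwa [orderOf_injective _ (MulAut.conj g).injective] at hxo

lemma isCommutative_of_le_s8 {H K : Subgroup G} (hK : IsMulCommutative K) (h : H ≤ K) :
    IsMulCommutative H := by
  constructor; constructor
  intro a b
  have h1 := hK.is_comm.comm ⟨a, h a.2⟩ ⟨b, h b.2⟩
  have h2 : (a : G) * b = (b : G) * a := congrArg Subtype.val h1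
  exact Subtype.ext h2

end Aux

/-- If all maximal elementary abelian `p`-subgroups of `G` are conjugate and `O_p(G) ≠ 1`,
then `Ω₁(Z(O_p(G)))` is a nontrivial elementary abelian `p`-subgroup contained in every
maximal elementary abelian `p`-subgroup of `G`. -/
theorem omega1_center_pcore_le_maxTori {G : Type*} [Group G] [Fintype G] {p : ℕ}
    [Fact p.Prime]
    (hconj : ∀ A B : Subgroup G, IsMaxTorus p A → IsMaxTorus p B →
      ∃ g : G, Subgroup.map (MulAut.conj g).toMonoidHom A = B)
    (hO : pcore p G ≠ ⊥) :
    Omega1 p (Subgroup.centralizer ((pcore p G : Subgroup G) : Set G) ⊓ pcore p G) ≠ ⊥ ∧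
    IsMulCommutative (Omega1 p (Subgroup.centralizer ((pcore p G : Subgroup G) : Set G) ⊓ pcore p G)) ∧
    (∀ x ∈ Omega1 p (Subgroup.centralizer ((pcore p G : Subgroup G) : Set G) ⊓ pcore p G),
      x ^ p = 1) ∧
    ∀ A : Subgroup G, IsMaxTorus p A →
      Omega1 p (Subgroup.centralizer ((pcore p G : Subgroup G) : Set G) ⊓ pcore p G) ≤ A := by
  set N : Subgroup G := pcore p G with hN
  set K : Subgroup G := Subgroup.centralizer (N : Set G) ⊓ N with hK
  set W : Subgroup G := Omega1 p K with hW
  -- K is commutative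
  have hKcomm : IsMulCommutative K := by
    constructor; constructor
    intro a b
    have h1 : (a : G) ∈ Subgroup.centralizer (N : Set G) := a.2.1
    have h2 : (b : G) * a = (a : G) * b :=
      Subgroup.mem_centralizer_iff.mp h1 b b.2.2
    exact Subtype.ext h2.symm
  -- the elements of K of order dividing p form a subgroup T
  have hcommKG : ∀ a b : G, a ∈ K → b ∈ K → Commute a b := by
    intro a b ha hb
    exact (Subgroup.mem_centralizer_iff.mp ha.1 b hb.2).symm
  let T : Subgroup G :=
    { carrier := {x : G | x ∈ K ∧ x ^ p = 1}
      one_mem' := ⟨K.one_mem, one_pow p⟩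
      mul_mem' := by
        rintro a b ⟨haK, hap⟩ ⟨hbK, hbp⟩
        refine ⟨K.mul_mem haK hbK, ?_⟩
        rw [(hcommKG a b haK hbK).mul_pow, hap, hbp, one_mul]
      inv_mem' := by
        rintro a ⟨haK, hap⟩
        exact ⟨K.inv_mem haK, by rw [inv_pow, hap, inv_one]⟩ }
  have hWT : W ≤ T := by
    rw [hW, Omega1]
    refine (Subgroup.closure_le T).2 ?_
    rintro x ⟨hxK, hxo⟩
    exact ⟨hxK, by rw [← hxo]; exact pow_orderOf_eq_one x⟩
  have hWK : W ≤ K := le_trans hWT (fun x hx => hx.1)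
  have hWcomm : IsMulCommutative W := isCommutative_of_le_s8 hKcomm hWK
  have hWexp : ∀ x ∈ W, x ^ p = 1 := fun x hx => (hWT hx).2
  -- nontriviality of W
  have hp := (Fact.out : p.Prime)
  obtain ⟨P⟩ : Nonempty (Sylow p G) := inferInstance
  have hNle : N ≤ (P : Subgroup G) := iInf_le _ P
  have hNp : IsPGroup p N := P.isPGroup'.to_le hNle
  have hNnt : Nontrivial N := by
    rcases N.bot_or_nontrivial with h | h
    · exact absurd h hO
    · exact h
  have hZnt : Nontrivial (Subgroup.center N) := hNp.center_nontrivial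
  obtain ⟨z, hz1⟩ := exists_ne (1 : Subgroup.center N)
  have hzc : ((z : N) : G) ∈ Subgroup.centralizer (N : Set G) := by
    rw [Subgroup.mem_centralizer_iff]
    intro h hh
    have := (Subgroup.mem_center_iff.mp z.2 ⟨h, hh⟩)
    exact congrArg Subtype.val this
  have hzK : ((z : N) : G) ∈ K := Subgroup.mem_inf.mpr ⟨hzc, (z : N).2⟩
  have hKp : IsPGroup p K := hNp.to_le inf_le_right
  have hKnt : Nontrivial K := by
    refine ⟨⟨⟨(z : N), hzK⟩, 1, ?_⟩⟩
    intro hc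
    apply hz1
    have : ((z : N) : G) = 1 := congrArg Subtype.val hc
    ext
    exact this
  haveI : Fintype K := Fintype.ofFinite _
  have hpdvd : p ∣ Fintype.card K := by
    obtain ⟨n, hn0, hcard⟩ := hKp.nontrivial_iff_card.mp hKnt
    rw [← Nat.card_eq_fintype_card, hcard]
    exact dvd_pow_self p hn0.ne'
  obtain ⟨y, hy⟩ := exists_prime_orderOf_dvd_card (G := K) p hpdvd
  have hyo : orderOf ((y : G)) = p :=
    (orderOf_injective K.subtype K.subtype_injective y).trans hy
  have hyW : (y : G) ∈ W := Subgroup.subset_closure ⟨y.2, hyo⟩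
  have hWbot : W ≠ ⊥ := by
    intro hc
    rw [hc, Subgroup.mem_bot] at hyW
    rw [hyW, orderOf_one] at hyo
    exact hp.one_lt.ne' hyo.symm
  refine ⟨hWbot, hWcomm, hWexp, ?_⟩
  -- W is contained in a maximal torus M
  obtain ⟨M, ⟨hMW, hMbot, hMcomm, hMexp⟩, hMmax⟩ :=
    Set.Finite.exists_maximalFor id
      {B : Subgroup G | W ≤ B ∧ B ≠ ⊥ ∧ IsMulCommutative B ∧ ∀ x ∈ B, x ^ p = 1}
      (Set.toFinite _) ⟨W, le_rfl, hWbot, hWcomm, hWexp⟩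
  have hM : IsMaxTorus p M :=
    ⟨hMbot, hMcomm, hMexp, fun B hB1 hB2 hB3 hle =>
      le_antisymm hle (hMmax ⟨le_trans hMW hle, hB1, hB2, hB3⟩ hle)⟩
  intro A hA
  obtain ⟨g, hg⟩ := hconj M A hM hA
  -- W is invariant under conjugation
  have hWinv : Subgroup.map (MulAut.conj g).toMonoidHom W = W := by
    rw [hW, hK, hN, map_conj_Omega1,
      Subgroup.map_inf _ _ _ (MulAut.conj g).injective, map_conj_pcore,
      map_conj_centralizer]
    have himg : (MulAut.conj g) '' ((pcore p G : Subgroup G) : Set G)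
        = ((pcore p G : Subgroup G) : Set G) := by
      calc (MulAut.conj g) '' ((pcore p G : Subgroup G) : Set G)
          = (MulAut.conj g).toMonoidHom '' ((pcore p G : Subgroup G) : Set G) := rfl
        _ = ((Subgroup.map (MulAut.conj g).toMonoidHom (pcore p G) : Subgroup G) : Set G) :=
            (Subgroup.coe_map _ _).symm
        _ = ((pcore p G : Subgroup G) : Set G) := by rw [map_conj_pcore]
    rw [himg]
  calc W = Subgroup.map (MulAut.conj g).toMonoidHom W := hWinv.symm
    _ ≤ Subgroup.map (MulAut.conj g).toMonoidHom M := Subgroup.map_mono hMW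
    _ = A := hg
end

section
/- Let X be a finite poset and g : X → X order-preserving with id_X ≤ g. If x ∈ X is maximal among the points not fixed by g, then x is an up beat point of X: the set {z ∈ X : z > x} has a minimum, namely g can be used to show that x < g(x) ≤ z for all z > x, so in fact every z > x satisfies z ≥ g(x), hence g(x) = min{z : z > x} provided g(x) > x. -/
/-- Let `g` be order-preserving on a finite poset with `id ≤ g`. If `x` is maximal among
the points not fixed by `g`, then `x` is an up beat point: `x < g x` and `g x` is the
minimum of `{z | x < z}`. -/
theorem up_beat_point_of_maximal_nonfixed {X : Type*} [Fintype X] [PartialOrder X]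
    (g : X → X) (hg : Monotone g) (h : ∀ x : X, x ≤ g x)
    (x : X) (hx : g x ≠ x) (hmax : ∀ z : X, g z ≠ z → ¬ x < z) :
    x < g x ∧ ∀ z : X, x < z → g x ≤ z := by
  refine ⟨lt_of_le_of_ne (h x) (Ne.symm hx), fun z hz => ?_⟩
  have hfix : g z = z := by
    by_contra hne
    exact hmax z hne hz
  calc g x ≤ g z := hg hz.le
    _ = z := hfix
end

section
/- Let G be a finite group, p a prime, and f, g : A_p(G) → A_p(G) order-preserving maps such that id ≥ f and f ≤ g pointwise. Then id ≤ g pointwise, i.e. A ≤ g(A) for every nontrivial elementary abelian p-subgroup A. -/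
/-- The poset `A_p(G)` of nontrivial elementary abelian `p`-subgroups of `G`,
ordered by inclusion. -/
def ApG (p : ℕ) (G : Type*) [Group G] : Type _ :=
  {H : Subgroup G // H ≠ ⊥ ∧ IsMulCommutative H ∧ ∀ x ∈ H, x ^ p = 1}

instance (p : ℕ) (G : Type*) [Group G] : PartialOrder (ApG p G) :=
  Subtype.partialOrder _

/-- If `f, g : A_p(G) →o A_p(G)` are order-preserving with `id ≥ f ≤ g` pointwise,
then `id ≤ g` pointwise. -/
theorem le_of_fence_ApG {G : Type*} [Group G] [Fintype G] {p : ℕ} [Fact p.Prime]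
    (f g : ApG p G →o ApG p G) (h1 : ∀ A, f A ≤ A) (h2 : ∀ A, f A ≤ g A) :
    ∀ A : ApG p G, A ≤ g A := by
  intro A
  have hp : p.Prime := Fact.out
  -- suffices to show each element of A lies in g A
  intro x hx
  by_cases hx1 : x = 1
  · subst hx1; exact (g A).1.one_mem
  -- x has order p
  have hxp : x ^ p = 1 := A.2.2.2 x hx
  have hord : orderOf x = p := by
    have h := orderOf_dvd_of_pow_eq_one hxp
    rcases (Nat.dvd_prime hp).mp h with h1 | h1
    · exact absurd (orderOf_eq_one_iff.mp h1) hx1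
    · exact h1
  -- the minimal element ⟨x⟩ of A_p(G)
  have hcomm : IsMulCommutative (Subgroup.zpowers x) := by infer_instance
  have hmem : ∀ y ∈ Subgroup.zpowers x, y ^ p = 1 := by
    rintro y ⟨n, rfl⟩
    rw [← zpow_natCast, ← zpow_mul, mul_comm, zpow_mul, zpow_natCast, hxp, one_zpow]
  have hbot : Subgroup.zpowers x ≠ ⊥ := by
    simp [Subgroup.zpowers_eq_bot, hx1]
  set B : ApG p G := ⟨Subgroup.zpowers x, hbot, hcomm, hmem⟩ with hB
  have hBA : B ≤ A := by
    show Subgroup.zpowers x ≤ A.1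
    exact Subgroup.zpowers_le.mpr hx
  -- f B = B since B is minimal: f B nontrivial and ≤ zpowers x, which has prime order
  have hcard : Nat.card (Subgroup.zpowers x) = p := by
    rw [Nat.card_zpowers, hord]
  have hfB : (f B).1 = Subgroup.zpowers x := by
    have hle : (f B).1 ≤ Subgroup.zpowers x := h1 B
    have hnt : Nontrivial (f B).1 := (Subgroup.nontrivial_iff_ne_bot _).mpr (f B).2.1
    obtain ⟨y, hy, hy1⟩ := (Subgroup.nontrivial_iff_exists_ne_one (f B).1).mp hnt
    have hyx : y ∈ Subgroup.zpowers x := hle hy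
    have hyp : y ^ p = 1 := hmem y hyx
    have hyord : orderOf y = p := by
      have h := orderOf_dvd_of_pow_eq_one hyp
      rcases (Nat.dvd_prime hp).mp h with h1 | h1
      · exact absurd (orderOf_eq_one_iff.mp h1) hy1
      · exact h1
    have hzy : Subgroup.zpowers y = Subgroup.zpowers x := by
      apply Subgroup.eq_of_le_of_card_ge (Subgroup.zpowers_le.mpr hyx)
      rw [Nat.card_zpowers, Nat.card_zpowers, hord, hyord]
    have : Subgroup.zpowers y ≤ (f B).1 := Subgroup.zpowers_le.mpr hy
    exact le_antisymm hle (hzy ▸ this)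
  have : x ∈ (f B).1 := by
    rw [hfB]; exact Subgroup.mem_zpowers x
  exact (g.monotone hBA : (g B).1 ≤ (g A).1) (h2 B this)
end

section
/- Let G be a finite group and p a prime. There exists an order-preserving map f : A_p(G) → A_p(G) and N ∈ A_p(G) with id ≤ f ≥ c_N (pointwise) if and only if the intersection of all maximal nontrivial elementary abelian p-subgroups of G is nontrivial, if and only if p divides |C_G(Ω₁(G))|. -/
section Helpers

variable {G : Type*} [Group G] {p : ℕ} [hp : Fact p.Prime]

/-- A nontrivial subgroup of a member of `A_p(G)` satisfies the defining predicate. -/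
lemma sub_apg {A : ApG p G} {H : Subgroup G} (hle : H ≤ A.1) (hne : H ≠ ⊥) :
    H ≠ ⊥ ∧ IsMulCommutative H ∧ ∀ x ∈ H, x ^ p = 1 := by
  refine ⟨hne, ?_, fun x hx => A.2.2.2 x (hle hx)⟩
  haveI := A.2.2.1
  exact ⟨⟨fun a b =>
    Subtype.ext (Subgroup.mul_comm_of_mem_isMulCommutative (H := A.1) (hle a.2) (hle b.2))⟩⟩

lemma apg_zpowers {g : G} (hg : orderOf g = p) :
    Subgroup.zpowers g ≠ ⊥ ∧ IsMulCommutative (Subgroup.zpowers g) ∧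
      ∀ x ∈ Subgroup.zpowers g, x ^ p = 1 := by
  refine ⟨?_, Subgroup.zpowers_isMulCommutative g, fun x hx => ?_⟩
  · rw [Ne, Subgroup.zpowers_eq_bot]
    intro h
    exact hp.out.ne_one (by rw [← hg, h, orderOf_one])
  · rw [← orderOf_dvd_iff_pow_eq_one, ← hg]
    exact orderOf_dvd_of_mem_zpowers hx

lemma apg_le_omega1 (A : ApG p G) : A.1 ≤ Omega1 p (⊤ : Subgroup G) := by
  intro a ha
  rcases eq_or_ne a 1 with rfl | h
  · exact Subgroup.one_mem _
  · apply Subgroup.subset_closure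
    refine ⟨Subgroup.mem_top a, ?_⟩
    rcases hp.out.eq_one_or_self_of_dvd _
        (orderOf_dvd_of_pow_eq_one (A.2.2.2 a ha)) with h1 | h1
    · exact absurd (orderOf_eq_one_iff.mp h1) h
    · exact h1

lemma exists_max_apg [Finite G] (A : ApG p G) : ∃ M : ApG p G, A ≤ M ∧ IsMax M := by
  haveI : Finite (Subgroup G) :=
    Finite.of_injective (fun H : Subgroup G => (H : Set G)) SetLike.coe_injective
  haveI : Finite (ApG p G) := Subtype.finite
  obtain ⟨M, hAM, hM⟩ := Finite.exists_le_maximal (a := A) (p := fun _ : ApG p G => True) trivial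
  exact ⟨M, hAM, maximal_true.mp hM⟩

/-- Key lemma: an element of order `p` centralizing `Ω₁(G)` lies in every maximal
elementary abelian `p`-subgroup. -/
lemma mem_max_of_central {x : G}
    (hx : x ∈ Subgroup.centralizer ((Omega1 p (⊤ : Subgroup G) : Subgroup G) : Set G))
    (hord : orderOf x = p) {A : ApG p G} (hA : IsMax A) : x ∈ A.1 := by
  have hx' := Subgroup.mem_centralizer_iff.mp hx
  set S : Set G := (A.1 : Set G) ∪ {x} with hS
  have hcx : ∀ c ∈ A.1, c * x = x * c := fun c hc => hx' c (apg_le_omega1 A hc)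
  have hcomm : ∀ a ∈ S, ∀ b ∈ S, a * b = b * a := by
    haveI := A.2.2.1
    rintro a (ha | ha) b (hb | hb)
    · exact Subgroup.mul_comm_of_mem_isMulCommutative (H := A.1) ha hb
    · rw [Set.mem_singleton_iff] at hb; rw [hb]; exact hcx a ha
    · rw [Set.mem_singleton_iff] at ha; rw [ha]; exact (hcx b hb).symm
    · rw [Set.mem_singleton_iff] at ha hb; rw [ha, hb]
  set K := Subgroup.closure S with hK
  have hAK : A.1 ≤ K := fun a ha => Subgroup.subset_closure (Or.inl ha)
  have hxK : x ∈ K := Subgroup.subset_closure (Or.inr rfl)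
  have hKbot : K ≠ ⊥ := by
    intro h
    exact A.2.1 (le_bot_iff.mp (le_trans hAK h.le))
  have hKcomm : IsMulCommutative K := by
    letI : CommGroup K := Subgroup.closureCommGroupOfComm hcomm
    exact ⟨⟨fun a b => mul_comm a b⟩⟩
  have hKpow : ∀ y ∈ K, y ^ p = 1 := by
    intro y hy
    induction hy using Subgroup.closure_induction with
    | mem z hz =>
      rcases hz with hz | hz
      · exact A.2.2.2 z hz
      · rw [Set.mem_singleton_iff] at hz
        rw [hz, ← hord]; exact pow_orderOf_eq_one x
    | one => exact one_pow p
    | mul a b ha hb iha ihb =>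
      have hab : Commute a b :=
        Subgroup.mul_comm_of_mem_isMulCommutative (H := K) ha hb
      rw [hab.mul_pow, iha, ihb, one_mul]
    | inv a ha iha => rw [inv_pow, iha, inv_one]
  have hAB : A ≤ (⟨K, hKbot, hKcomm, hKpow⟩ : ApG p G) := hAK
  exact hA hAB hxK

end Helpers

/-- There is an order-preserving `f : A_p(G) → A_p(G)` and `N ∈ A_p(G)` with
`id ≤ f ≥ c_N` iff the intersection of all maximal nontrivial elementary abelian
`p`-subgroups of `G` is nontrivial, iff `p` divides `|C_G(Ω₁(G))|`. -/
theorem two_step_contractibility {G : Type*} [Group G] [Fintype G] {p : ℕ} [Fact p.Prime]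
    (hdvd : p ∣ Nat.card G) :
    ((∃ (f : ApG p G →o ApG p G) (N : ApG p G), ∀ A : ApG p G, A ≤ f A ∧ N ≤ f A) ↔
      (⨅ A : {A : ApG p G // IsMax A}, (A.1.1 : Subgroup G)) ≠ ⊥) ∧
    ((⨅ A : {A : ApG p G // IsMax A}, (A.1.1 : Subgroup G)) ≠ ⊥ ↔
      p ∣ Nat.card (Subgroup.centralizer ((Omega1 p (⊤ : Subgroup G) : Subgroup G) : Set G))) := by
  have hp : Fact p.Prime := inferInstance
  -- `A_p(G)` is nonempty, so a maximal element exists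
  obtain ⟨g₀, hg₀⟩ := exists_prime_orderOf_dvd_card' p hdvd
  obtain ⟨M₀, hM₀le, hM₀⟩ := exists_max_apg (⟨Subgroup.zpowers g₀, apg_zpowers hg₀⟩ : ApG p G)
  set I := (⨅ A : {A : ApG p G // IsMax A}, (A.1.1 : Subgroup G)) with hIdef
  have hIle : ∀ {A : ApG p G}, IsMax A → I ≤ A.1 := fun hA => iInf_le (fun A : {A : ApG p G // IsMax A} => (A.1.1 : Subgroup G)) ⟨_, hA⟩
  refine ⟨⟨?_, ?_⟩, ?_, ?_⟩
  · -- f exists → intersection nontrivial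
    rintro ⟨f, N, hf⟩
    have hNle : N.1 ≤ I := by
      refine le_iInf ?_
      rintro ⟨A, hA⟩
      exact le_trans ((hf A).2 : N.1 ≤ (f A).1) (hA (hf A).1 : (f A).1 ≤ A.1)
    intro h
    exact N.2.1 (le_bot_iff.mp (le_trans hNle h.le))
  · -- intersection nontrivial → f exists
    intro hI
    obtain ⟨hI2, hI3⟩ := (sub_apg (hIle hM₀) hI).2
    have hsub : ∀ A : ApG p G, (A.1 ⊔ I ≠ ⊥) ∧ IsMulCommutative ↥(A.1 ⊔ I) ∧
        ∀ x ∈ A.1 ⊔ I, x ^ p = 1 := by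
      intro A
      obtain ⟨M, hAM, hM⟩ := exists_max_apg A
      refine sub_apg (A := M) (sup_le (hAM : A.1 ≤ M.1) (hIle hM)) (fun h => hI ?_)
      exact le_bot_iff.mp (le_trans le_sup_right h.le)
    exact ⟨⟨fun A => ⟨A.1 ⊔ I, hsub A⟩,
        fun A B hAB => (sup_le_sup_right (hAB : A.1 ≤ B.1) I : A.1 ⊔ I ≤ B.1 ⊔ I)⟩,
      ⟨I, hI, hI2, hI3⟩,
      fun A => ⟨(le_sup_left : A.1 ≤ A.1 ⊔ I), (le_sup_right : I ≤ A.1 ⊔ I)⟩⟩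
  · -- intersection nontrivial → p ∣ |C_G(Ω₁)|
    intro hI
    obtain ⟨hIc, hIp⟩ := (sub_apg (hIle hM₀) hI).2
    obtain ⟨⟨x, hxI⟩, hx1⟩ := Subgroup.ne_bot_iff_exists_ne_one.mp hI
    have hx1' : x ≠ 1 := fun h => hx1 (Subtype.ext h)
    have hord : orderOf x = p := by
      rcases hp.out.eq_one_or_self_of_dvd _
          (orderOf_dvd_of_pow_eq_one (hIp x hxI)) with h | h
      · exact absurd (orderOf_eq_one_iff.mp h) hx1'
      · exact h
    have hxc : x ∈ Subgroup.centralizer ((Omega1 p (⊤ : Subgroup G) : Subgroup G) : Set G) := by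
      rw [Subgroup.mem_centralizer_iff]
      intro h hh
      rw [SetLike.mem_coe, Omega1] at hh
      induction hh using Subgroup.closure_induction with
      | mem z hz =>
        obtain ⟨-, hzp⟩ := hz
        obtain ⟨M, hzM, hM⟩ :=
          exists_max_apg (⟨Subgroup.zpowers z, apg_zpowers hzp⟩ : ApG p G)
        haveI := M.2.2.1
        exact Subgroup.mul_comm_of_mem_isMulCommutative (H := M.1)
          ((hzM : Subgroup.zpowers z ≤ M.1) (Subgroup.mem_zpowers z)) (hIle hM hxI)
      | one => rw [one_mul, mul_one]
      | mul a b ha hb iha ihb => rw [mul_assoc, ihb, ← mul_assoc, iha, mul_assoc]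
      | inv a ha iha =>
        calc a⁻¹ * x = a⁻¹ * (a * x * a⁻¹) := by rw [iha]; group
        _ = x * a⁻¹ := by group
    have := Subgroup.orderOf_dvd_natCard _ hxc
    rwa [hord] at this
  · -- p ∣ |C_G(Ω₁)| → intersection nontrivial
    intro hdvd'
    obtain ⟨y, hy⟩ := exists_prime_orderOf_dvd_card' p hdvd'
    have hord : orderOf (y : G) = p := by rw [Subgroup.orderOf_coe, hy]
    have hmem : (y : G) ∈ I := by
      rw [hIdef, Subgroup.mem_iInf]
      rintro ⟨A, hA⟩
      exact mem_max_of_central y.2 hord hA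
    intro h
    rw [h, Subgroup.mem_bot] at hmem
    exact hp.out.ne_one (by rw [← hord, hmem, orderOf_one])
end

section
/- Let X be a finite poset that is a reduced lattice (every pair of elements with an upper bound has a supremum in X) which is atomic (every element is the supremum of the minimal elements below it). If f, g : X → X are order-preserving with id_X ≥ f ≤ g pointwise, then id_X ≤ g pointwise. -/
/-- Let `X` be a finite poset which is a reduced lattice (every upper-bounded pair has a
supremum) and atomic (every element is the supremum of the minimal elements below it).
If `f, g : X → X` are order-preserving with `id ≥ f ≤ g` pointwise, then `id ≤ g`. -/
theorem le_of_fence_atomic {X : Type*} [Fintype X] [PartialOrder X]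
    (hred : ∀ x y : X, (∃ z, x ≤ z ∧ y ≤ z) → ∃ s, IsLUB {x, y} s)
    (hatomic : ∀ x : X, IsLUB {y : X | IsMin y ∧ y ≤ x} x)
    (f g : X →o X) (hf : ∀ x, f x ≤ x) (hfg : ∀ x, f x ≤ g x) :
    ∀ x : X, x ≤ g x := by
  intro x
  refine (hatomic x).2 ?_
  rintro y ⟨hy, hyx⟩
  have hfy : f y = y := le_antisymm (hf y) (hy (hf y))
  calc y = f y := hfy.symm
    _ ≤ g y := hfg y
    _ ≤ g x := g.mono hyx
end
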